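/- Let D̄ = {z ∈ ℂ : ‖z‖ ≤ 1} and Circle = {z ∈ ℂ : ‖z‖ = 1}, let c ∈ ℝ with c ≠ 0, and let φ : D̄ × Circle → ℂ be continuous and odd in the fiber variable: φ(p, −w) = −φ(p, w) for all p ∈ D̄, w ∈ Circle. Suppose that for every t ∈ [0,1] the value φ(exp(2πit), −exp(2πit)) lies on the affine line {w ∈ ℂ : Re(w) + Im(w) = c}. Then there exist p ∈ D̄ and w ∈ Circle with φ(p, w) = 0. -/

import Mathlib

/-!
If `φ` never vanished, the loops `H s t = φ (s • e^{2πit}, -e^{2πit})`, `s ∈ [0, 1]`, would form a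
homotopy in `ℂ \ {0}`. A continuous logarithm `L` of `H` on `ℝ × ℝ` then has a winding increment
`L (s, t + 1) - L (s, t)` independent of `(s, t)`. At `s = 1` the loop stays on a line missing
the origin, hence in a half-plane where `log` is continuous, so the increment is `0`. At `s = 0`
the oddness of `φ` makes the loop antiperiodic, `H (0, t + 1/2) = -H (0, t)`, so the increment is
twice an odd multiple of `πi`.
-/

open Real Complex

/-- Negation on the unit circle. -/
noncomputable instance : Neg Circle :=
  ⟨fun z => ⟨-(z : ℂ), by simp [Submonoid.unitSphere, mem_sphere_zero_iff_norm, Circle.norm_coe]⟩⟩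

open Set Function

theorem Circle.exp_add_pi (x : ℝ) : Circle.exp (x + π) = -Circle.exp x :=
  Subtype.ext <| show Complex.exp _ = -Complex.exp _ by
    rw [ofReal_add, add_mul, Complex.exp_add, exp_pi_mul_I, mul_neg_one]

namespace Complex

theorem mem_slitPlane_of_re_add_im_eq {c : ℝ} (hc : c ≠ 0) {w : ℂ} (hw : w.re + w.im = c) :
    (1 - I) / c * w ∈ slitPlane := by
  have hre : ((1 - I) / c * w).re = (w.re + w.im) / c := by
    simp only [mul_re, div_ofReal_re, div_ofReal_im, sub_re, sub_im, one_re, one_im, I_re, I_im]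
    ring
  exact mem_slitPlane_iff.2 (Or.inl (by rw [hre, hw, div_self hc]; exact one_pos))

section Lifts

variable {X : Type*} [TopologicalSpace X]

theorem exists_continuous_exp_eq [SimplyConnectedSpace X] [LocallyPathConnectedSpace X]
    {g : X → ℂ} (hg : Continuous g) (hg₀ : ∀ x, g x ≠ 0) :
    ∃ L : X → ℂ, Continuous L ∧ ∀ x, exp (L x) = g x := by
  obtain ⟨x₀⟩ := (inferInstance : Nonempty X)
  obtain ⟨L, ⟨-, hL⟩, -⟩ := isCoveringMapOn_exp.existsUnique_continuousMap_lifts ⟨g, hg⟩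
    (exp_log (hg₀ x₀)) hg₀
  exact ⟨L, L.continuous, congrFun hL⟩

theorem sub_eq_sub_of_exp_eq_exp [PreconnectedSpace X] {f g : X → ℂ} (hf : Continuous f)
    (hg : Continuous g) (h : ∀ x, exp (f x) = exp (g x)) (x y : X) :
    f x - g x = f y - g y :=
  isCoveringMap_exp.const_of_comp (hf.sub hg)
    (fun a b => Subtype.ext (by simp [exp_sub, h])) x y

end Lifts

section Loops

variable {γ L : ℝ → ℂ}

theorem lift_eq_of_mul_mem_slitPlane (hL : Continuous L) (hexp : ∀ t, exp (L t) = γ t)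
    {u : ℂ} (hu : ∀ t, u * γ t ∈ slitPlane) {a b : ℝ} (hab : γ a = γ b) : L a = L b := by
  have hγ : Continuous γ := (continuous_exp.comp hL).congr hexp
  have hu₀ : u ≠ 0 := left_ne_zero_of_mul (slitPlane_ne_zero (hu 0))
  have key := sub_eq_sub_of_exp_eq_exp (f := fun t => L t + log u) (g := fun t => log (u * γ t))
    (hL.add continuous_const) ((continuous_const.mul hγ).clog hu) (fun t => by
      rw [exp_add, exp_log hu₀, exp_log (slitPlane_ne_zero (hu t)), hexp, mul_comm]) a b
  rwa [hab, sub_left_inj, add_left_inj] at key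

theorem lift_one_eq_lift_zero_of_periodic (hL : Continuous L) (hexp : ∀ t, exp (L t) = γ t)
    (hγ : Periodic γ 1) {u : ℂ} (hu : ∀ t ∈ Icc (0 : ℝ) 1, u * γ t ∈ slitPlane) :
    L 1 = L 0 := by
  refine lift_eq_of_mul_mem_slitPlane hL hexp (u := u) (fun t => ?_) (by simpa using hγ 0)
  rw [← hγ.sub_int_mul_eq ⌊t⌋, mul_one]
  exact hu _ ⟨Int.fract_nonneg t, (Int.fract_lt_one t).le⟩

theorem lift_one_ne_lift_zero_of_antiperiodic (hL : Continuous L)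
    (hexp : ∀ t, exp (L t) = γ t) (hγ : Antiperiodic γ (1 / 2)) : L 1 ≠ L 0 := by
  intro h
  have hhalf := sub_eq_sub_of_exp_eq_exp (hL.comp (continuous_add_const (1 / 2)))
    (g := fun t => L t + π * I) (hL.add continuous_const) (fun t => by
      rw [comp_apply, hexp, hγ, exp_add, hexp, exp_pi_mul_I, mul_neg_one])
    (1 / 2) 0
  have hL_half : L (1 / 2) = L 0 := by
    norm_num [h] at hhalf
    linear_combination -hhalf / 2
  have hγ_half := hγ 0
  rw [zero_add, ← hexp, hL_half, hexp] at hγ_half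
  exact (hexp 0 ▸ exp_ne_zero _ : γ 0 ≠ 0) (by linear_combination hγ_half / 2)

end Loops

theorem exists_eq_zero_of_antiperiodic_of_mul_mem_slitPlane {H : ℝ × ℝ → ℂ}
    (hH : Continuous H) (hper : ∀ s t, H (s, t + 1) = H (s, t))
    (hanti : ∀ t, H (0, t + 1 / 2) = -H (0, t)) {u : ℂ}
    (hu : ∀ t ∈ Icc (0 : ℝ) 1, u * H (1, t) ∈ slitPlane) : ∃ x, H x = 0 := by
  by_contra! hH₀
  obtain ⟨L, hL, hexp⟩ := exists_continuous_exp_eq hH hH₀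
  have hL_loop (s : ℝ) : Continuous fun t => L (s, t) := hL.comp (Continuous.prodMk_right s)
  have hwinding := sub_eq_sub_of_exp_eq_exp (f := fun x => L (x.1, x.2 + 1)) (g := L)
    (hL.comp (by fun_prop)) hL (fun x => by rw [hexp, hexp, hper]) (0, 0) (1, 0)
  have hL₁ := lift_one_eq_lift_zero_of_periodic (hL_loop 1) (fun t => hexp _) (hper 1) hu
  refine lift_one_ne_lift_zero_of_antiperiodic (hL_loop 0) (fun t => hexp _) hanti ?_
  norm_num at hwinding
  linear_combination hwinding + hL₁

end Complex

/-- Let `φ : D̄ × Circle → ℂ` be continuous and odd in the fiber variable, and let `c ≠ 0`.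
If for every `t ∈ [0,1]` the value `φ (exp (2πit), -exp (2πit))` lies on the line
`{w : ℂ | Re w + Im w = c}`, then `φ` vanishes somewhere. -/
theorem exists_zero_of_boundary_values_on_line
    (c : ℝ) (hc : c ≠ 0)
    (φ : (Metric.closedBall (0 : ℂ) 1) × Circle → ℂ) (hφ : Continuous φ)
    (hodd : ∀ (p : Metric.closedBall (0 : ℂ) 1) (w : Circle), φ (p, -w) = -φ (p, w))
    (hline : ∀ t ∈ Set.Icc (0 : ℝ) 1,
      ∀ v : (Metric.closedBall (0 : ℂ) 1) × Circle,
      (v.1 : ℂ) = Complex.exp (2 * π * t * Complex.I) →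
      (v.2 : ℂ) = -Complex.exp (2 * π * t * Complex.I) →
      φ v ∈ {w : ℂ | w.re + w.im = c}) :
    ∃ (p : Metric.closedBall (0 : ℂ) 1) (w : Circle), φ (p, w) = 0 := by
  by_contra! hφ₀
  let e (t : ℝ) : Circle := Circle.exp (2 * π * t)
  have hbase (s t : ℝ) :
      (projIcc (0 : ℝ) 1 zero_le_one s : ℝ) * (e t : ℂ) ∈ Metric.closedBall (0 : ℂ) 1 := by
    obtain ⟨r, hr₀, hr₁⟩ := projIcc (0 : ℝ) 1 zero_le_one s
    simpa [abs_of_nonneg hr₀, Circle.norm_coe] using hr₁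
  let H (x : ℝ × ℝ) : ℂ := φ (⟨_, hbase x.1 x.2⟩, -e x.2)
  have hH : Continuous H := by
    have hfiber : Continuous fun t => -e t :=
      Continuous.subtype_mk (by fun_prop : Continuous fun t => -(e t : ℂ)) _
    exact hφ.comp ((Continuous.subtype_mk (by fun_prop) _).prodMk (hfiber.comp continuous_snd))
  have hper (s t : ℝ) : H (s, t + 1) = H (s, t) := by
    have he : e (t + 1) = e t := by simp only [e, mul_add, mul_one, Circle.exp_add_two_pi]
    simp only [H, he]
  have hanti (t : ℝ) : H (0, t + 1 / 2) = -H (0, t) := by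
    have he : e (t + 1 / 2) = -e t := by
      simp only [e, mul_add, mul_one_div, mul_div_cancel_left₀ π two_ne_zero, Circle.exp_add_pi]
    have hcentre : (⟨_, hbase 0 (t + 1 / 2)⟩ : Metric.closedBall (0 : ℂ) 1) = ⟨_, hbase 0 t⟩ :=
      Subtype.ext (by simp)
    simp only [H]
    rw [hcentre, he, hodd]
  have hslit (t : ℝ) (ht : t ∈ Icc (0 : ℝ) 1) : (1 - I) / c * H (1, t) ∈ slitPlane :=
    mem_slitPlane_of_re_add_im_eq hc <| hline t ht _ (by simp [e, Circle.coe_exp])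
      (by change -(Circle.exp _ : ℂ) = _; simp [Circle.coe_exp])
  obtain ⟨x, hx⟩ := exists_eq_zero_of_antiperiodic_of_mul_mem_slitPlane hH hper hanti hslit
  exact hφ₀ _ _ hx
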